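/- The universal Novikov field Λ over a field k, consisting of formal sums Σ c_{a_i} T^{a_i} with real exponents a_i → ∞ and coefficients c_{a_i} ∈ k, is a field: every nonzero element has a multiplicative inverse. -/

import Mathlib

/-!
Write `x = c T^a (1 - y)` with `c T^a` the leading term of a nonzero `x`; then `y` has support in
`(0, ∞)` and `x⁻¹ = c⁻¹ T^(-a) ∑ yⁿ`. The support of `∑ yⁿ` lies in the additive monoid generated
by the support of `y`, and below any bound `b` that monoid only contains sums of boundedly many
of the finitely many support points `≤ b`, because these are all at least some `δ > 0`.
-/

/-- An element of the Hahn series field `HahnSeries ℝ k` lies in the universal Novikov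
field over `k` when its support (the set of exponents `a_i` of `T` with nonzero
coefficient) tends to `+∞`, i.e. has only finitely many elements below any bound. -/
def IsNovikov {k : Type*} [Field k] (f : HahnSeries ℝ k) : Prop :=
  ∀ b : ℝ, {r : ℝ | r ∈ f.support ∧ r ≤ b}.Finite

open Set Pointwise

theorem Multiset.le_nsmul_val_of_forall_mem_of_card_le {α : Type*} [DecidableEq α]
    {l : Multiset α} {F : Finset α} {N : ℕ} (hlF : ∀ a ∈ l, a ∈ F) (hcard : Multiset.card l ≤ N) :
    l ≤ N • F.val :=
  Multiset.le_iff_count.2 fun a => by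
    by_cases ha : a ∈ l
    · rw [Multiset.count_nsmul, Multiset.count_eq_one_of_mem F.nodup (hlF a ha), mul_one]
      exact (Multiset.count_le_card a l).trans hcard
    · simp [Multiset.count_eq_zero.2 ha]

namespace Set

variable {Γ : Type*}

def FiniteBelow [Preorder Γ] (S : Set Γ) : Prop :=
  ∀ b, (S ∩ Iic b).Finite

section Preorder

variable [Preorder Γ] {S T : Set Γ}

theorem FiniteBelow.mono (hT : T.FiniteBelow) (h : S ⊆ T) : S.FiniteBelow := fun b =>
  (hT b).subset (inter_subset_inter_left _ h)

theorem Finite.finiteBelow (hS : S.Finite) : S.FiniteBelow := fun _ =>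
  hS.inter_of_left _

theorem FiniteBelow.union (hS : S.FiniteBelow) (hT : T.FiniteBelow) : (S ∪ T).FiniteBelow :=
  fun b => by
    rw [union_inter_distrib_right]
    exact (hS b).union (hT b)

end Preorder

theorem FiniteBelow.bddBelow [LinearOrder Γ] [Nonempty Γ] {S : Set Γ} (hS : S.FiniteBelow) :
    BddBelow S := by
  rcases S.eq_empty_or_nonempty with rfl | ⟨s, hs⟩
  · exact bddBelow_empty
  obtain ⟨m, hm⟩ := (hS s).bddBelow
  refine ⟨m, fun x hx => ?_⟩
  rcases le_total x s with hxs | hsx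
  · exact hm ⟨hx, hxs⟩
  · exact (hm ⟨hs, le_rfl⟩).trans hsx

theorem FiniteBelow.add [AddCommGroup Γ] [LinearOrder Γ] [IsOrderedAddMonoid Γ] {S T : Set Γ}
    (hS : S.FiniteBelow) (hT : T.FiniteBelow) : (S + T).FiniteBelow := by
  obtain ⟨mS, hmS⟩ := hS.bddBelow
  obtain ⟨mT, hmT⟩ := hT.bddBelow
  intro b
  refine ((hS (b - mT)).image2 (· + ·) (hT (b - mS))).subset ?_
  rintro _ ⟨⟨s, hs, t, ht, rfl⟩, hb⟩
  refine ⟨s, ⟨hs, ?_⟩, t, ⟨ht, ?_⟩, rfl⟩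
  · exact le_sub_iff_add_le.2 ((add_le_add le_rfl (hmT ht)).trans hb)
  · exact le_sub_iff_add_le'.2 ((add_le_add (hmS hs) le_rfl).trans hb)

theorem FiniteBelow.addSubmonoid_closure [AddCommMonoid Γ] [LinearOrder Γ]
    [IsOrderedCancelAddMonoid Γ] [Archimedean Γ] {S : Set Γ} (hS : S.FiniteBelow)
    (hpos : ∀ x ∈ S, 0 < x) : (AddSubmonoid.closure S : Set Γ).FiniteBelow := by
  classical
  rcases S.eq_empty_or_nonempty with rfl | ⟨s₀, hs₀⟩
  · simpa using (finite_singleton (0 : Γ)).finiteBelow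
  intro b
  obtain ⟨F, hF⟩ := (hS b).exists_finset_coe
  obtain ⟨δ, hδ, hδmin⟩ := (insert s₀ (S ∩ Iic b)).exists_min_image id ((hS b).insert s₀)
    (insert_nonempty _ _)
  have hδpos : 0 < δ := hpos δ (by rcases hδ with rfl | hδ; exacts [hs₀, hδ.1])
  obtain ⟨N, hN⟩ := Archimedean.arch b hδpos
  refine ((N • F.val).powerset.map Multiset.sum).toFinset.finite_toSet.subset ?_
  rintro _ ⟨hr, hrb⟩
  obtain ⟨l, hl, rfl⟩ := AddSubmonoid.exists_multiset_of_mem_closure hr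
  have hlb : ∀ y ∈ l, y ∈ S ∩ Iic b := fun y hy =>
    ⟨hl y hy, (Multiset.single_le_sum (fun z hz => (hpos z (hl z hz)).le) y hy).trans hrb⟩
  have hcard : Multiset.card l ≤ N := (nsmul_le_nsmul_iff_left hδpos).1 <|
    (Multiset.card_nsmul_le_sum fun y hy => hδmin y (mem_insert_of_mem _ (hlb y hy))).trans
      (hrb.trans hN)
  have hlF : l ≤ N • F.val := Multiset.le_nsmul_val_of_forall_mem_of_card_le
    (fun y hy => by simpa [← hF] using hlb y hy) hcard
  simpa using ⟨l, hlF, rfl⟩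

end Set

namespace HahnSeries

open SummableFamily

variable {Γ R : Type*} [AddCommGroup Γ] [LinearOrder Γ] [IsOrderedAddMonoid Γ]

theorem finiteBelow_support_mul [Semiring R] {x y : HahnSeries Γ R} (hx : x.support.FiniteBelow)
    (hy : y.support.FiniteBelow) : (x * y).support.FiniteBelow :=
  (hx.add hy).mono support_mul_subset

theorem finiteBelow_support_hsum_powers [CommRing R] [Archimedean Γ] {x : HahnSeries Γ R}
    (hx : 0 < x.orderTop) (hs : x.support.FiniteBelow) : (powers x).hsum.support.FiniteBelow := by
  have hpos : ∀ g ∈ x.support, 0 < g := fun g hg =>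
    WithTop.coe_pos.1 (hx.trans_le (orderTop_le_of_coeff_ne_zero hg))
  refine (hs.addSubmonoid_closure hpos).mono (support_hsum_subset.trans (iUnion_subset fun n => ?_))
  rw [powers_of_orderTop_pos hx]
  exact support_pow_subset_closure x n

theorem finiteBelow_support_inv [Field R] [Archimedean Γ] {x : HahnSeries Γ R}
    (hx : x.support.FiniteBelow) : x⁻¹.support.FiniteBelow := by
  obtain rfl | hx0 := eq_or_ne x 0
  · simpa using (finite_empty (α := Γ)).finiteBelow
  set s := single (-x.order) x.leadingCoeff⁻¹
  have hs : s.support.FiniteBelow := (finite_singleton _).finiteBelow.mono support_single_subset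
  have h1 : (1 : HahnSeries Γ R).support.FiniteBelow := by
    rw [support_one]
    exact (finite_singleton 0).finiteBelow
  have hy : (1 - s * x).support.FiniteBelow :=
    (h1.union (finiteBelow_support_mul hs hx)).mono (support_sub_subset _ _)
  have hy_pos : 0 < (1 - s * x).orderTop :=
    unit_aux x (inv_mul_cancel₀ (leadingCoeff_ne_zero.2 hx0)) _ (neg_add_cancel _)
  rw [inv_def]
  exact finiteBelow_support_mul hs (finiteBelow_support_hsum_powers hy_pos hy)

end HahnSeries

theorem isNovikov_iff_finiteBelow_support {k : Type*} [Field k] {f : HahnSeries ℝ k} :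
    IsNovikov f ↔ f.support.FiniteBelow :=
  Iff.rfl

/-- The universal Novikov field `Λ` over a field `k`, consisting of formal
sums `Σ c_{a_i} T^{a_i}` with real exponents `a_i → ∞` and coefficients in `k`, is a field:
every nonzero element has a multiplicative inverse (again lying in `Λ`). -/
theorem novikov_is_field (k : Type*) [Field k] (f : HahnSeries ℝ k)
    (hf : IsNovikov f) (h0 : f ≠ 0) :
    ∃ g : HahnSeries ℝ k, IsNovikov g ∧ f * g = 1 ∧ g * f = 1 :=
  ⟨f⁻¹,
    isNovikov_iff_finiteBelow_support.2 <|
      HahnSeries.finiteBelow_support_inv (isNovikov_iff_finiteBelow_support.1 hf),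
    mul_inv_cancel₀ h0, inv_mul_cancel₀ h0⟩
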